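/- The code {0, 1, 2, 5, 6, 11} is a locating-dominating code in the circulant graph C_{15}(1,2,3), yet there exists k (namely k = 3) such that neither k nor k+7 is in the code; hence the characterization of locating-dominating codes in C_n(1,2,…,r) via the conditions 'for every k, at least one of k and k+(2r+1) is a codeword and {k,…,k+(2r+1)} contains at least two codewords' is false. -/

import Mathlib

/-- Closed neighbourhood of `u` in the circulant graph `C_n(1,2,3)`. -/
def nbhd123 {n : ℕ} (u : ZMod n) : Finset (ZMod n) :=
  {u - 3, u - 2, u - 1, u, u + 1, u + 2, u + 3}

def iset123 {n : ℕ} (C : Finset (ZMod n)) (u : ZMod n) : Finset (ZMod n) :=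
  nbhd123 u ∩ C

def IsLocDom123 {n : ℕ} (C : Finset (ZMod n)) : Prop :=
  (∀ u : ZMod n, (iset123 C u).Nonempty) ∧
    ∀ u v : ZMod n, u ∉ C → v ∉ C → u ≠ v → iset123 C u ≠ iset123 C v

theorem counterexample_characterization :
    IsLocDom123 ({0, 1, 2, 5, 6, 11} : Finset (ZMod 15)) ∧
    (3 : ZMod 15) ∉ ({0, 1, 2, 5, 6, 11} : Finset (ZMod 15)) ∧
    (3 + 7 : ZMod 15) ∉ ({0, 1, 2, 5, 6, 11} : Finset (ZMod 15)) := by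
  unfold IsLocDom123
  decide
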